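/- Let N ≥ 2 and λ > 0. Assume w : ℝ^N → ℝ is continuously differentiable, and there exist σ > 0 and ρ₀ > 0 such that both w(z) and ‖∇w(z)‖ are bounded by σ |z|^{−(N−1)/2} e^{−√λ|z|} for all |z| ≥ ρ₀. Assume f : ℝ → ℝ is continuous, f(t) = 0 for t ≤ 0, f ≥ 0, and |f(t)| ≤ D(|t|^{p₁} + |t|^{p₂}) for all t, where D > 0 and 1 < p₁ ≤ p₂. Assume that for all a, b ∈ ℝ^N the identity ∫_{ℝ^N} ( ∇w(x−a)·∇w(x−b) + λ w(x−a) w(x−b) ) dx = (1/2) ∫_{ℝ^N} f(w(x−a)) w(x−b) dx + (1/2) ∫_{ℝ^N} f(w(x−b)) w(x−a) dx holds. Assume ξ : ℝ^N → [0,1] is a C¹ function with ξ ≡ 0 on the ball B_ρ(0) and ξ ≡ 1 on ℝ^N \ B_{2ρ}(0), for some ρ > 0; for θ ∈ ℝ^N and R > 0 set Φ^{Rθ}(x) := ξ(x) w(x − Rθ). Let x₀, y ∈ ℝ^N with |x₀| = 1 and |y − x₀| = 2. Then lim_{R→∞} R^{(N−1)/2} e^{2R√λ} | ∫_{ℝ^N}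 ( ∇Φ^{Ry}(x)·∇Φ^{Rx₀}(x) + λ Φ^{Ry}(x) Φ^{Rx₀}(x) ) dx − (1/2) ∫_{ℝ^N} f(w(x−Ry)) w(x−Rx₀) dx − (1/2) ∫_{ℝ^N} f(w(x−Rx₀)) w(x−Ry) dx | = 0. -/

import Mathlib

open MeasureTheory Filter Metric RealInnerProductSpace Topology

/-!
Outside `B_{2ρ}` the cutoff `ξ` is identically `1`, so there the energy density of the cutoff
translates `ξ w(· - Ry)`, `ξ w(· - Rx₀)` equals that of the plain translates. The exponential decay
makes the latter integrable, so by the assumed identity for translates the whole expression is the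
integral over `B_{2ρ}` of the difference of the two densities. On that ball `x - Ry` and `x - Rx₀`
have norm at least `R - 2ρ` (as `‖y‖, ‖x₀‖ ≥ 1`), so the difference is
`O(R^{-(N-1)} e^{-2√λ (R - 2ρ)})`, and after multiplying by `R^{(N-1)/2} e^{2R√λ}` what is left is
`O(R^{-(N-1)/2}) → 0`.
-/

section Gradient

variable {E : Type*} [NormedAddCommGroup E] [InnerProductSpace ℝ E] [CompleteSpace E]

theorem gradient_mul_comp_sub {ξ w : E → ℝ} {a x : E} (hξ : DifferentiableAt ℝ ξ x)
    (hw : DifferentiableAt ℝ w (x - a)) :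
    gradient (fun x' => ξ x' * w (x' - a)) x =
      ξ x • gradient w (x - a) + w (x - a) • gradient ξ x := by
  have hwa : HasFDerivAt (fun x' => w (x' - a)) (fderiv ℝ w (x - a)) x :=
    hw.hasFDerivAt.comp x (hasFDerivAt_sub_const a)
  have hmul : HasFDerivAt (fun x' => ξ x' * w (x' - a)) _ x := hξ.hasFDerivAt.mul hwa
  rw [gradient, hmul.fderiv, map_add, map_smul, map_smul]
  rfl

theorem ContDiff.continuous_gradient {w : E → ℝ} (hw : ContDiff ℝ 1 w) :
    Continuous (gradient w) :=
  (InnerProductSpace.toDual ℝ E).symm.continuous.comp (hw.continuous_fderiv one_ne_zero)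

end Gradient

def HasExpDecay {E F : Type*} [Norm E] [Norm F] (g : E → F) (σ ρ₀ α k : ℝ) : Prop :=
  ∀ z, ρ₀ ≤ ‖z‖ → ‖g z‖ ≤ σ * ‖z‖ ^ (-α) * Real.exp (-(k * ‖z‖))

namespace HasExpDecay

variable {E F : Type*} [NormedAddCommGroup E] [NormedAddCommGroup F] {g : E → F} {σ ρ₀ α k : ℝ}

theorem norm_le (hg : HasExpDecay g σ ρ₀ α k) (hα : 0 ≤ α) (hk : 0 ≤ k) {s t : ℝ} {z : E}
    (hs : 0 < s) (hρ₀s : ρ₀ ≤ s) (hsz : s ≤ ‖z‖) (htz : t ≤ ‖z‖) :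
    ‖g z‖ ≤ σ * s ^ (-α) * Real.exp (-(k * t)) := by
  have hgz := hg z (hρ₀s.trans hsz)
  have hσ : 0 ≤ σ := by
    have : 0 ≤ σ * (‖z‖ ^ (-α) * Real.exp (-(k * ‖z‖))) := by
      rw [← mul_assoc]; exact (norm_nonneg _).trans hgz
    have hz : 0 < ‖z‖ := hs.trans_le hsz
    exact nonneg_of_mul_nonneg_left this (by positivity)
  refine hgz.trans (mul_le_mul (mul_le_mul_of_nonneg_left ?_ hσ) ?_ (by positivity)
    (by positivity))
  · exact Real.rpow_le_rpow_of_nonpos hs hsz (neg_nonpos.mpr hα)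
  · exact Real.exp_le_exp.mpr (by nlinarith)

theorem norm_le_abs_mul_exp (hg : HasExpDecay g σ ρ₀ α k) (hα : 0 ≤ α) {z : E}
    (hz : max ρ₀ 1 ≤ ‖z‖) : ‖g z‖ ≤ |σ| * Real.exp (-(k * ‖z‖)) := by
  have hpow : ‖z‖ ^ (-α) ≤ 1 :=
    Real.rpow_le_one_of_one_le_of_nonpos ((le_max_right _ _).trans hz) (neg_nonpos.mpr hα)
  refine (hg z ((le_max_left _ _).trans hz)).trans (mul_le_mul_of_nonneg_right ?_ (by positivity))
  nlinarith [le_abs_self σ, abs_nonneg σ, Real.rpow_nonneg (norm_nonneg z) (-α)]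

theorem exists_bound [ProperSpace E] (hg : HasExpDecay g σ ρ₀ α k) (hcont : Continuous g)
    (hα : 0 ≤ α) (hk : 0 ≤ k) : ∃ C, ∀ z, ‖g z‖ ≤ C := by
  obtain ⟨M, hM⟩ := (isCompact_closedBall (0 : E) (max ρ₀ 1)).exists_bound_of_continuousOn
    hcont.continuousOn
  refine ⟨max M |σ|, fun z => ?_⟩
  rcases le_or_gt ‖z‖ (max ρ₀ 1) with hz | hz
  · exact (hM z (mem_closedBall_zero_iff.mpr hz)).trans (le_max_left _ _)
  · refine (hg.norm_le_abs_mul_exp hα hz.le).trans ((mul_le_of_le_one_right (abs_nonneg σ) ?_).trans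
      (le_max_right _ _))
    exact Real.exp_le_one_iff.mpr (by nlinarith [norm_nonneg z])

theorem integrable [NormedSpace ℝ E] [FiniteDimensional ℝ E] [MeasurableSpace E] [BorelSpace E]
    (μ : Measure E) [μ.IsAddHaarMeasure] (hg : HasExpDecay g σ ρ₀ α k) (hcont : Continuous g)
    (hα : 0 ≤ α) (hk : 0 < k) : Integrable g μ := by
  have hexp : (fun z : E => Real.exp (-(k * ‖z‖))) =O[cocompact E]
      fun z => (1 + ‖z‖) ^ (-((Module.finrank ℝ E : ℝ) + 1)) := by
    have h1 : Tendsto (fun z : E => 1 + ‖z‖) (cocompact E) atTop :=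
      tendsto_atTop_add_const_left _ 1 tendsto_norm_cocompact_atTop
    refine (((isLittleO_exp_neg_mul_rpow_atTop hk _).comp_tendsto h1).isBigO.const_mul_left
      (Real.exp k)).congr_left fun z => ?_
    simp only [Function.comp_apply, ← Real.exp_add]
    ring_nf
  refine hcont.locallyIntegrable.integrable_of_isBigO_cocompact ?_
    ((integrable_one_add_norm (μ := μ) (r := (Module.finrank ℝ E : ℝ) + 1)
      (by linarith)).integrableAtFilter _)
  refine (Asymptotics.IsBigO.of_bound |σ| ?_).trans hexp
  filter_upwards [tendsto_norm_cocompact_atTop.eventually_ge_atTop (max ρ₀ 1)] with z hz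
  rw [Real.norm_of_nonneg (Real.exp_pos _).le]
  exact hg.norm_le_abs_mul_exp hα hz

end HasExpDecay

theorem norm_smul_add_smul_le {F : Type*} [NormedAddCommGroup F] [NormedSpace ℝ F]
    {s u M B : ℝ} {g p : F} (hs : ‖s‖ ≤ M) (hp : ‖p‖ ≤ M)
    (hu : ‖u‖ ≤ B) (hg : ‖g‖ ≤ B) : ‖s • g + u • p‖ ≤ 2 * M * B := by
  refine (norm_add_le _ _).trans ?_
  rw [norm_smul, norm_smul]
  nlinarith [mul_le_mul hs hg (norm_nonneg _) ((norm_nonneg _).trans hs),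
    mul_le_mul hu hp (norm_nonneg _) ((norm_nonneg _).trans hu)]

theorem sub_le_norm_sub_smul {E : Type*} [NormedAddCommGroup E] [NormedSpace ℝ E] {x y : E}
    {r R : ℝ} (hx : ‖x‖ ≤ r) (hy : 1 ≤ ‖y‖) (hR : 0 ≤ R) : R - r ≤ ‖x - R • y‖ := by
  have hRy : R ≤ ‖R • y‖ := by
    rw [norm_smul, Real.norm_of_nonneg hR]
    nlinarith
  rw [norm_sub_rev]
  linarith [norm_sub_norm_le (R • y) x]

theorem rpow_mul_exp_mul_sq_decay {R : ℝ} (hR : 0 < R) (σ α k r : ℝ) :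
    R ^ α * Real.exp (2 * R * k) * (σ * (R / 2) ^ (-α) * Real.exp (-(k * (R - r)))) ^ 2 =
      σ ^ 2 * 2 ^ (2 * α) * Real.exp (2 * k * r) * R ^ (-α) := by
  have hpow : R ^ α * ((R / 2) ^ (-α)) ^ 2 = 2 ^ (2 * α) * R ^ (-α) := by
    rw [Real.div_rpow hR.le zero_le_two, Real.rpow_neg hR.le, Real.rpow_neg zero_le_two,
      mul_comm 2 α, Real.rpow_mul zero_le_two, Real.rpow_two]
    have := (Real.rpow_pos_of_pos hR α).ne'
    field_simp
  have hexp : Real.exp (2 * R * k) * Real.exp (-(k * (R - r))) ^ 2 = Real.exp (2 * k * r) := by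
    rw [sq, ← Real.exp_add, ← Real.exp_add]
    ring_nf
  calc _ = σ ^ 2 * (R ^ α * ((R / 2) ^ (-α)) ^ 2) *
        (Real.exp (2 * R * k) * Real.exp (-(k * (R - r))) ^ 2) := by ring
    _ = _ := by rw [hpow, hexp]; ring

section Cutoff

variable {E : Type*} [NormedAddCommGroup E] [InnerProductSpace ℝ E] [CompleteSpace E]
  {lam : ℝ} {ξ w : E → ℝ}

/-- The energy density of `ξ w(· - a)`, `ξ w(· - b)` (gradients expanded by the product rule)
minus that of `w(· - a)`, `w(· - b)`. -/
noncomputable def cutoffDefect (lam : ℝ) (ξ w : E → ℝ) (a b x : E) : ℝ :=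
  (⟪ξ x • gradient w (x - a) + w (x - a) • gradient ξ x,
      ξ x • gradient w (x - b) + w (x - b) • gradient ξ x⟫ +
    lam * ((ξ x * w (x - a)) * (ξ x * w (x - b)))) -
  (⟪gradient w (x - a), gradient w (x - b)⟫ + lam * (w (x - a) * w (x - b)))

theorem cutoff_energyDensity_eq (hξ : Differentiable ℝ ξ) (hw : Differentiable ℝ w) (a b x : E) :
    ⟪gradient (fun x' => ξ x' * w (x' - a)) x, gradient (fun x' => ξ x' * w (x' - b)) x⟫ +
        lam * ((ξ x * w (x - a)) * (ξ x * w (x - b))) =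
      cutoffDefect lam ξ w a b x +
        (⟪gradient w (x - a), gradient w (x - b)⟫ + lam * (w (x - a) * w (x - b))) := by
  rw [gradient_mul_comp_sub (hξ x) (hw _), gradient_mul_comp_sub (hξ x) (hw _)]
  exact (sub_add_cancel _ _).symm

theorem cutoffDefect_eq_zero {r : ℝ} (hξ1 : ∀ x ∉ ball (0 : E) r, ξ x = 1) (a b : E) {x : E}
    (hx : x ∉ closedBall (0 : E) r) : cutoffDefect lam ξ w a b x = 0 := by
  have hr : r < ‖x‖ := by simpa using hx
  have hξ_nhds : ξ =ᶠ[𝓝 x] fun _ => 1 :=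
    ((continuous_norm.tendsto x).eventually_const_lt hr).mono fun z hz =>
      hξ1 z (by simpa using hz.le)
  have hgrad : gradient ξ x = 0 := hξ_nhds.gradient_eq.trans (gradient_fun_const x 1)
  simp only [cutoffDefect, hξ_nhds.eq_of_nhds, hgrad, one_smul, smul_zero, add_zero, one_mul,
    sub_self]

theorem integrable_cutoffDefect [ProperSpace E] [MeasurableSpace E] [OpensMeasurableSpace E]
    (μ : Measure E) [IsFiniteMeasureOnCompacts μ] (hξ : ContDiff ℝ 1 ξ) (hw : ContDiff ℝ 1 w)
    {r : ℝ} (hξ1 : ∀ x ∉ ball (0 : E) r, ξ x = 1) (a b : E) :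
    Integrable (cutoffDefect lam ξ w a b) μ := by
  have := hξ.continuous
  have := hw.continuous
  have := hξ.continuous_gradient
  have := hw.continuous_gradient
  have hcont : Continuous (cutoffDefect lam ξ w a b) := by
    unfold cutoffDefect
    fun_prop
  exact hcont.integrable_of_hasCompactSupport
    (HasCompactSupport.intro (isCompact_closedBall 0 r) fun x => cutoffDefect_eq_zero hξ1 a b)

theorem integrable_energyDensity_comp_sub [FiniteDimensional ℝ E] [MeasurableSpace E]
    [BorelSpace E] (μ : Measure E) [μ.IsAddHaarMeasure] {σ ρ₀ α k : ℝ} (hw : ContDiff ℝ 1 w)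
    (hwd : HasExpDecay w σ ρ₀ α k) (hgd : HasExpDecay (gradient w) σ ρ₀ α k) (hα : 0 ≤ α)
    (hk : 0 < k) (a b : E) :
    Integrable (fun x => ⟪gradient w (x - a), gradient w (x - b)⟫ +
      lam * (w (x - a) * w (x - b))) μ := by
  have hgc := hw.continuous_gradient
  obtain ⟨C, hC⟩ := hgd.exists_bound hgc hα hk.le
  obtain ⟨C', hC'⟩ := hwd.exists_bound hw.continuous hα hk.le
  have hinner : Integrable (fun x => ⟪gradient w (x - a), gradient w (x - b)⟫) μ := by
    refine (((hgd.integrable μ hgc hα hk).comp_sub_right b).norm.const_mul C).mono'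
      (by fun_prop) (ae_of_all _ fun x => ?_)
    exact (norm_inner_le_norm _ _).trans
      (mul_le_mul_of_nonneg_right (hC _) (norm_nonneg _))
  have hprod : Integrable (fun x => w (x - a) * w (x - b)) μ :=
    ((hwd.integrable μ hw.continuous hα hk).comp_sub_right b).bdd_mul
      (by fun_prop) (ae_of_all _ fun x => hC' _)
  exact hinner.add (hprod.const_mul lam)

theorem integral_cutoff_energy_sub_eq [ProperSpace E] [MeasurableSpace E] [OpensMeasurableSpace E]
    (μ : Measure E) [IsFiniteMeasureOnCompacts μ] (f : ℝ → ℝ) (hξ : ContDiff ℝ 1 ξ)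
    (hw : ContDiff ℝ 1 w) {r : ℝ} (hξ1 : ∀ x ∉ ball (0 : E) r, ξ x = 1) {a b : E}
    (hident : (∫ x, (⟪gradient w (x - a), gradient w (x - b)⟫ + lam * (w (x - a) * w (x - b))) ∂μ) =
      (1 / 2) * (∫ x, f (w (x - a)) * w (x - b) ∂μ) + (1 / 2) * (∫ x, f (w (x - b)) * w (x - a) ∂μ))
    (hI : Integrable (fun x => ⟪gradient w (x - a), gradient w (x - b)⟫ +
      lam * (w (x - a) * w (x - b))) μ) :
    (∫ x, (⟪gradient (fun x' => ξ x' * w (x' - a)) x, gradient (fun x' => ξ x' * w (x' - b)) x⟫ +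
        lam * ((ξ x * w (x - a)) * (ξ x * w (x - b)))) ∂μ) -
      (1 / 2) * (∫ x, f (w (x - a)) * w (x - b) ∂μ) -
        (1 / 2) * (∫ x, f (w (x - b)) * w (x - a) ∂μ) =
      ∫ x in closedBall (0 : E) r, cutoffDefect lam ξ w a b x ∂μ := by
  simp only [cutoff_energyDensity_eq (hξ.differentiable one_ne_zero)
    (hw.differentiable one_ne_zero)]
  rw [integral_add (integrable_cutoffDefect μ hξ hw hξ1 a b) hI, hident,
    setIntegral_eq_integral_of_forall_compl_eq_zero fun x => cutoffDefect_eq_zero hξ1 a b]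
  ring

theorem norm_cutoffDefect_le (hlam : 0 ≤ lam) {a b x : E} {M B : ℝ} (hξ : ‖ξ x‖ ≤ M)
    (hgξ : ‖gradient ξ x‖ ≤ M) (hwa : ‖w (x - a)‖ ≤ B) (hga : ‖gradient w (x - a)‖ ≤ B)
    (hwb : ‖w (x - b)‖ ≤ B) (hgb : ‖gradient w (x - b)‖ ≤ B) :
    ‖cutoffDefect lam ξ w a b x‖ ≤ (4 * M ^ 2 + lam * M ^ 2 + 1 + lam) * B ^ 2 := by
  have hM : 0 ≤ M := (norm_nonneg _).trans hξ
  have hB : 0 ≤ B := (norm_nonneg _).trans hwa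
  have hcut : |⟪ξ x • gradient w (x - a) + w (x - a) • gradient ξ x,
      ξ x • gradient w (x - b) + w (x - b) • gradient ξ x⟫| ≤ (2 * M * B) * (2 * M * B) :=
    (abs_real_inner_le_norm _ _).trans (mul_le_mul (norm_smul_add_smul_le hξ hgξ hwa hga)
      (norm_smul_add_smul_le hξ hgξ hwb hgb) (norm_nonneg _) (by positivity))
  have hgrad : |⟪gradient w (x - a), gradient w (x - b)⟫| ≤ B * B :=
    (abs_real_inner_le_norm _ _).trans (mul_le_mul hga hgb (norm_nonneg _) hB)
  have hcutprod : |(ξ x * w (x - a)) * (ξ x * w (x - b))| ≤ (M * B) * (M * B) := by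
    rw [← Real.norm_eq_abs, norm_mul, norm_mul, norm_mul]
    exact mul_le_mul (mul_le_mul hξ hwa (norm_nonneg _) hM) (mul_le_mul hξ hwb (norm_nonneg _) hM)
      (by positivity) (by positivity)
  have hprod : |w (x - a) * w (x - b)| ≤ B * B := by
    rw [← Real.norm_eq_abs, norm_mul]
    exact mul_le_mul hwa hwb (norm_nonneg _) hB
  rw [Real.norm_eq_abs, cutoffDefect, abs_le]
  obtain ⟨h1, h2⟩ := abs_le.mp hcut
  obtain ⟨h3, h4⟩ := abs_le.mp hgrad
  obtain ⟨h5, h6⟩ := abs_le.mp hcutprod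
  obtain ⟨h7, h8⟩ := abs_le.mp hprod
  constructor <;> nlinarith [mul_le_mul_of_nonneg_left h6 hlam, mul_le_mul_of_nonneg_left h5 hlam,
    mul_le_mul_of_nonneg_left h7 hlam, mul_le_mul_of_nonneg_left h8 hlam]

theorem tendsto_rpow_mul_exp_mul_setIntegral_cutoffDefect [ProperSpace E] [MeasurableSpace E]
    [OpensMeasurableSpace E] (μ : Measure E) [IsFiniteMeasureOnCompacts μ] (hξ : ContDiff ℝ 1 ξ)
    {σ ρ₀ α k : ℝ} (hwd : HasExpDecay w σ ρ₀ α k) (hgd : HasExpDecay (gradient w) σ ρ₀ α k)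
    (hα : 0 < α) (hk : 0 ≤ k) (hlam : 0 ≤ lam) {x₀ y : E} (hx₀ : 1 ≤ ‖x₀‖) (hy : 1 ≤ ‖y‖)
    (r : ℝ) :
    Tendsto (fun R : ℝ => R ^ α * Real.exp (2 * R * k) *
      |∫ x in closedBall (0 : E) r, cutoffDefect lam ξ w (R • y) (R • x₀) x ∂μ|) atTop (𝓝 0) := by
  obtain ⟨M₁, hM₁⟩ := (isCompact_closedBall (0 : E) r).exists_bound_of_continuousOn
    hξ.continuous.continuousOn
  obtain ⟨M₂, hM₂⟩ := (isCompact_closedBall (0 : E) r).exists_bound_of_continuousOn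
    hξ.continuous_gradient.continuousOn
  set M := max M₁ M₂
  set K := 4 * M ^ 2 + lam * M ^ 2 + 1 + lam
  set V := (μ (closedBall (0 : E) r)).toReal
  have hdefect : ∀ᶠ R in atTop, ∀ x ∈ closedBall (0 : E) r,
      ‖cutoffDefect lam ξ w (R • y) (R • x₀) x‖ ≤
        K * (σ * (R / 2) ^ (-α) * Real.exp (-(k * (R - r)))) ^ 2 := by
    filter_upwards [eventually_ge_atTop (2 * r), eventually_ge_atTop (2 * ρ₀),
      eventually_gt_atTop 0] with R hRr hRρ₀ hR x hx
    have hxr : ‖x‖ ≤ r := mem_closedBall_zero_iff.mp hx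
    have hfar : ∀ {v : E}, 1 ≤ ‖v‖ → R / 2 ≤ ‖x - R • v‖ ∧ R - r ≤ ‖x - R • v‖ := fun hv =>
      have := sub_le_norm_sub_smul hxr hv hR.le
      ⟨by linarith, this⟩
    obtain ⟨hy₁, hy₂⟩ := hfar hy
    obtain ⟨hx₁, hx₂⟩ := hfar hx₀
    exact norm_cutoffDefect_le hlam ((hM₁ x hx).trans (le_max_left _ _))
      ((hM₂ x hx).trans (le_max_right _ _))
      (hwd.norm_le hα.le hk (half_pos hR) (by linarith) hy₁ hy₂)
      (hgd.norm_le hα.le hk (half_pos hR) (by linarith) hy₁ hy₂)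
      (hwd.norm_le hα.le hk (half_pos hR) (by linarith) hx₁ hx₂)
      (hgd.norm_le hα.le hk (half_pos hR) (by linarith) hx₁ hx₂)
  have hlim := (tendsto_rpow_neg_atTop hα).const_mul
    (K * V * (σ ^ 2 * 2 ^ (2 * α) * Real.exp (2 * k * r)))
  rw [mul_zero] at hlim
  refine squeeze_zero' ?_ ?_ hlim
  · filter_upwards [eventually_ge_atTop 0] with R hR
    positivity
  filter_upwards [hdefect, eventually_gt_atTop 0] with R hR hpos
  calc R ^ α * Real.exp (2 * R * k) *
        |∫ x in closedBall (0 : E) r, cutoffDefect lam ξ w (R • y) (R • x₀) x ∂μ|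
      ≤ R ^ α * Real.exp (2 * R * k) *
          (K * (σ * (R / 2) ^ (-α) * Real.exp (-(k * (R - r)))) ^ 2 * V) := by
        rw [← Real.norm_eq_abs]
        gcongr
        exact norm_setIntegral_le_of_norm_le_const measure_closedBall_lt_top hR
    _ = K * V * (R ^ α * Real.exp (2 * R * k) *
          (σ * (R / 2) ^ (-α) * Real.exp (-(k * (R - r)))) ^ 2) := by ring
    _ = _ := by rw [rpow_mul_exp_mul_sq_decay hpos]; ring

end Cutoff

theorem stmt6_general (N : ℕ) (hN : 2 ≤ N) (lam : ℝ) (hlam : 0 < lam)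
    (w : EuclideanSpace ℝ (Fin N) → ℝ) (hw : ContDiff ℝ 1 w)
    (σ ρ₀ : ℝ)
    (hwdecay : ∀ z : EuclideanSpace ℝ (Fin N), ρ₀ ≤ ‖z‖ →
      |w z| ≤ σ * ‖z‖ ^ (-(((N : ℝ) - 1) / 2)) * Real.exp (-(Real.sqrt lam * ‖z‖)) ∧
      ‖gradient w z‖ ≤ σ * ‖z‖ ^ (-(((N : ℝ) - 1) / 2)) * Real.exp (-(Real.sqrt lam * ‖z‖)))
    (f : ℝ → ℝ)
    (hident : ∀ a b : EuclideanSpace ℝ (Fin N),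
      (∫ x, (⟪gradient w (x - a), gradient w (x - b)⟫ + lam * (w (x - a) * w (x - b)))) =
        (1 / 2) * (∫ x, f (w (x - a)) * w (x - b)) +
          (1 / 2) * (∫ x, f (w (x - b)) * w (x - a)))
    (ρ : ℝ)
    (ξ : EuclideanSpace ℝ (Fin N) → ℝ) (hξ : ContDiff ℝ 1 ξ)
    (hξ1 : ∀ x ∉ Metric.ball (0 : EuclideanSpace ℝ (Fin N)) (2 * ρ), ξ x = 1)
    (x₀ y : EuclideanSpace ℝ (Fin N)) (hx₀ : ‖x₀‖ = 1) (hy : ‖y - x₀‖ = 2) :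
    Tendsto (fun R : ℝ =>
        R ^ (((N : ℝ) - 1) / 2) * Real.exp (2 * R * Real.sqrt lam) *
          |(∫ x, (⟪gradient (fun x' => ξ x' * w (x' - R • y)) x,
              gradient (fun x' => ξ x' * w (x' - R • x₀)) x⟫ +
              lam * ((ξ x * w (x - R • y)) * (ξ x * w (x - R • x₀))))) -
            (1 / 2) * (∫ x, f (w (x - R • y)) * w (x - R • x₀)) -
            (1 / 2) * (∫ x, f (w (x - R • x₀)) * w (x - R • y))|) atTop (nhds 0) := by
  have hα : 0 < ((N : ℝ) - 1) / 2 := by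
    have : (2 : ℝ) ≤ N := by exact_mod_cast hN
    linarith
  have hk : 0 < Real.sqrt lam := Real.sqrt_pos.mpr hlam
  have hwd : HasExpDecay w σ ρ₀ (((N : ℝ) - 1) / 2) (Real.sqrt lam) := fun z hz =>
    (Real.norm_eq_abs _).trans_le (hwdecay z hz).1
  have hgd : HasExpDecay (gradient w) σ ρ₀ (((N : ℝ) - 1) / 2) (Real.sqrt lam) := fun z hz =>
    (hwdecay z hz).2
  have hy₁ : 1 ≤ ‖y‖ := by linarith [norm_sub_le y x₀]
  simp only [integral_cutoff_energy_sub_eq volume f hξ hw hξ1 (hident _ _)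
    (integrable_energyDensity_comp_sub volume hw hwd hgd hα.le hk _ _)]
  exact tendsto_rpow_mul_exp_mul_setIntegral_cutoffDefect volume hξ hwd hgd hα hk.le hlam.le
    hx₀.ge hy₁ (2 * ρ)

theorem stmt6 (N : ℕ) (hN : 2 ≤ N) (lam : ℝ) (hlam : 0 < lam)
    (w : EuclideanSpace ℝ (Fin N) → ℝ) (hw : ContDiff ℝ 1 w)
    (σ ρ₀ : ℝ) (hσ : 0 < σ) (hρ₀ : 0 < ρ₀)
    (hwdecay : ∀ z : EuclideanSpace ℝ (Fin N), ρ₀ ≤ ‖z‖ →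
      |w z| ≤ σ * ‖z‖ ^ (-(((N : ℝ) - 1) / 2)) * Real.exp (-(Real.sqrt lam * ‖z‖)) ∧
      ‖gradient w z‖ ≤ σ * ‖z‖ ^ (-(((N : ℝ) - 1) / 2)) * Real.exp (-(Real.sqrt lam * ‖z‖)))
    (f : ℝ → ℝ) (D p₁ p₂ : ℝ) (hD : 0 < D) (hp₁ : 1 < p₁) (hp : p₁ ≤ p₂)
    (hfcont : Continuous f) (hf0 : ∀ t ≤ (0:ℝ), f t = 0) (hfnn : ∀ t, 0 ≤ f t)
    (hfgrowth : ∀ t : ℝ, |f t| ≤ D * (|t| ^ p₁ + |t| ^ p₂))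
    (hident : ∀ a b : EuclideanSpace ℝ (Fin N),
      (∫ x, (⟪gradient w (x - a), gradient w (x - b)⟫ + lam * (w (x - a) * w (x - b)))) =
        (1 / 2) * (∫ x, f (w (x - a)) * w (x - b)) +
          (1 / 2) * (∫ x, f (w (x - b)) * w (x - a)))
    (ρ : ℝ) (hρ : 0 < ρ)
    (ξ : EuclideanSpace ℝ (Fin N) → ℝ) (hξ : ContDiff ℝ 1 ξ)
    (hξ01 : ∀ x, ξ x ∈ Set.Icc (0:ℝ) 1)
    (hξ0 : ∀ x ∈ Metric.ball (0 : EuclideanSpace ℝ (Fin N)) ρ, ξ x = 0)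
    (hξ1 : ∀ x ∉ Metric.ball (0 : EuclideanSpace ℝ (Fin N)) (2 * ρ), ξ x = 1)
    (x₀ y : EuclideanSpace ℝ (Fin N)) (hx₀ : ‖x₀‖ = 1) (hy : ‖y - x₀‖ = 2) :
    Tendsto (fun R : ℝ =>
        R ^ (((N : ℝ) - 1) / 2) * Real.exp (2 * R * Real.sqrt lam) *
          |(∫ x, (⟪gradient (fun x' => ξ x' * w (x' - R • y)) x,
              gradient (fun x' => ξ x' * w (x' - R • x₀)) x⟫ +
              lam * ((ξ x * w (x - R • y)) * (ξ x * w (x - R • x₀))))) -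
            (1 / 2) * (∫ x, f (w (x - R • y)) * w (x - R • x₀)) -
            (1 / 2) * (∫ x, f (w (x - R • x₀)) * w (x - R • y))|) atTop (nhds 0) :=
  stmt6_general N hN lam hlam w hw σ ρ₀ hwdecay f hident ρ ξ hξ hξ1 x₀ y hx₀ hy
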